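/- arXiv:1510.07220 — 2 statements merged into one kernel-verified Lean document; each statement's English description precedes it below -/
import Mathlib

section
/- For a digit n with 1 ≤ n ≤ 9 and k ≥ 1, the number of integers in {1, 2, ..., (n+1)·10^k − 1} whose leading decimal digit equals n is exactly (10^{k+1} − 1)/9. -/
def leadingDigit (b x : ℕ) : ℕ := x / b ^ Nat.log b x

/-! The numbers with leading digit `d` in base `b` are the disjoint blocks
`[d * b ^ j, (d + 1) * b ^ j)`, one per number of digits `j + 1`, and the block for `j` has
`b ^ j` elements. Below `(d + 1) * b ^ k` lie exactly the blocks with `j ≤ k`, so the count is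
the geometric sum `1 + b + ⋯ + b ^ k = (b ^ (k + 1) - 1) / (b - 1)`. -/

open Finset

namespace Nat

variable {b d x j : ℕ}

theorem succ_mul_pow_le_pow_succ (hdb : d < b) (j : ℕ) : (d + 1) * b ^ j ≤ b ^ (j + 1) := by
  rw [pow_succ']
  exact Nat.mul_le_mul_right _ hdb

theorem log_eq_of_mem_Ico_mul_pow (hd : 0 < d) (hdb : d < b)
    (hx : x ∈ Ico (d * b ^ j) ((d + 1) * b ^ j)) : log b x = j := by
  rw [mem_Ico] at hx
  exact log_eq_of_pow_le_of_lt_pow ((Nat.le_mul_of_pos_left _ hd).trans hx.1)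
    (hx.2.trans_le (succ_mul_pow_le_pow_succ hdb j))

end Nat

open Nat

variable {b d x : ℕ}

theorem leadingDigit_eq_iff (hd : 0 < d) (hdb : d < b) :
    leadingDigit b x = d ↔ ∃ j, x ∈ Ico (d * b ^ j) ((d + 1) * b ^ j) := by
  constructor
  · rintro rfl
    refine ⟨log b x, mem_Ico.2 ⟨div_mul_le_self _ _, ?_⟩⟩
    rw [add_one_mul]
    exact lt_div_mul_add (pow_pos (by omega) _)
  · rintro ⟨j, hx⟩
    rw [leadingDigit, log_eq_of_mem_Ico_mul_pow hd hdb hx]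
    exact Nat.div_eq_of_lt_le (mem_Ico.1 hx).1 (mem_Ico.1 hx).2

theorem filter_leadingDigit_eq_biUnion (hd : 0 < d) (hdb : d < b) (k : ℕ) :
    (Icc 1 ((d + 1) * b ^ k - 1)).filter (fun x => leadingDigit b x = d)
      = (range (k + 1)).biUnion fun j => Ico (d * b ^ j) ((d + 1) * b ^ j) := by
  ext x
  simp only [mem_filter, mem_Icc, mem_biUnion, mem_range, leadingDigit_eq_iff hd hdb]
  constructor
  · rintro ⟨⟨hx1, hxk⟩, j, hx⟩
    refine ⟨j, ?_, hx⟩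
    rw [← log_eq_of_mem_Ico_mul_pow hd hdb hx]
    have := succ_mul_pow_le_pow_succ hdb k
    exact log_lt_of_lt_pow (by omega) (by omega)
  · rintro ⟨j, hj, hx⟩
    have hblock := mem_Ico.1 hx
    have hjk : (d + 1) * b ^ j ≤ (d + 1) * b ^ k :=
      Nat.mul_le_mul_left _ (Nat.pow_le_pow_right (by omega) (by omega))
    have hpos : 0 < d * b ^ j := Nat.mul_pos hd (pow_pos (by omega) _)
    exact ⟨⟨by omega, by omega⟩, j, hx⟩

theorem card_filter_leadingDigit_eq (hd : 0 < d) (hdb : d < b) (k : ℕ) :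
    #((Icc 1 ((d + 1) * b ^ k - 1)).filter (fun x => leadingDigit b x = d))
      = ∑ j ∈ range (k + 1), b ^ j := by
  rw [filter_leadingDigit_eq_biUnion hd hdb, card_biUnion]
  · congr! 1 with j
    rw [card_Ico, add_one_mul, Nat.add_sub_cancel_left]
  · intro i _ j _ hij
    exact disjoint_left.2 fun x hi hj =>
      hij ((log_eq_of_mem_Ico_mul_pow hd hdb hi).symm.trans (log_eq_of_mem_Ico_mul_pow hd hdb hj))

theorem count_leading_max_general (n k : ℕ) (hn : 1 ≤ n) (hn9 : n ≤ 9) :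
    ((Finset.Icc 1 ((n + 1) * 10 ^ k - 1)).filter (fun x => leadingDigit 10 x = n)).card
      = (10 ^ (k + 1) - 1) / 9 := by
  rw [card_filter_leadingDigit_eq hn (by omega)]
  exact Nat.geomSum_eq (by norm_num) _

theorem count_leading_max (n k : ℕ) (hn : 1 ≤ n) (hn9 : n ≤ 9) (hk : 1 ≤ k) :
    ((Finset.Icc 1 ((n + 1) * 10 ^ k - 1)).filter (fun x => leadingDigit 10 x = n)).card
      = (10 ^ (k + 1) - 1) / 9 :=
  count_leading_max_general n k hn hn9
end

section
/- For all digits n with 1 ≤ n ≤ 9, the limiting minimal frequency 1/(9n) is strictly less than the Benford probability log₁₀(1 + 1/n), which is strictly less than the limiting maximal frequency 10/(9(n+1)). -/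
/-!
The tangent-line bound `log y < y - 1`, applied at `y = 1 + 1/x` and at its inverse, traps
`log (1 + 1/x)` strictly between `1/(x+1)` and `1/x`. Dividing by `log 10`, which lies in `(2, 4)`,
leaves room for both inequalities as soon as `x ≥ 1`.
-/

open Real

namespace Real

lemma one_sub_inv_lt_log {x : ℝ} (hx : 0 < x) (hx1 : x ≠ 1) : 1 - x⁻¹ < log x := by
  have := log_lt_sub_one_of_pos (inv_pos.2 hx) (inv_ne_one.2 hx1)
  rw [log_inv] at this
  linarith

lemma one_div_add_one_lt_log_one_add_one_div {x : ℝ} (hx : 0 < x) :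
    1 / (x + 1) < log (1 + 1 / x) := by
  convert one_sub_inv_lt_log (x := 1 + 1 / x) (by positivity) (by simp [hx.ne']) using 1
  field_simp
  ring

lemma log_one_add_one_div_lt_one_div {x : ℝ} (hx : 0 < x) : log (1 + 1 / x) < 1 / x := by
  have := log_lt_sub_one_of_pos (x := 1 + 1 / x) (by positivity) (by simp [hx.ne'])
  linarith

lemma two_lt_log_ten : 2 < log 10 := by
  rw [lt_log_iff_exp_lt (by norm_num), show (2 : ℝ) = (2 : ℕ) by norm_num, ← exp_one_pow]
  calc exp 1 ^ 2 < 2.7182818286 ^ 2 := by gcongr; exact exp_one_lt_d9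
    _ < 10 := by norm_num

lemma log_ten_lt_four : log 10 < 4 := by
  rw [log_lt_iff_lt_exp (by norm_num), show (4 : ℝ) = (4 : ℕ) by norm_num, ← exp_one_pow]
  calc (10 : ℝ) < 2.7182818283 ^ 4 := by norm_num
    _ < exp 1 ^ 4 := by gcongr; exact exp_one_gt_d9

end Real

lemma one_div_nine_mul_lt_logb_ten {x : ℝ} (hx : 1 ≤ x) :
    1 / (9 * x) < logb 10 (1 + 1 / x) := by
  rw [logb, div_lt_div_iff₀ (by positivity) (by linarith [two_lt_log_ten]), one_mul]
  calc log 10 < 4 := log_ten_lt_four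
    _ ≤ 9 * x / (x + 1) := by rw [le_div_iff₀ (by positivity)]; linarith
    _ = 9 * x * (1 / (x + 1)) := by ring
    _ < 9 * x * log (1 + 1 / x) := by
      gcongr; exact one_div_add_one_lt_log_one_add_one_div (by positivity)
    _ = log (1 + 1 / x) * (9 * x) := by ring

lemma logb_ten_lt_ten_div_nine_mul {x : ℝ} (hx : 1 ≤ x) :
    logb 10 (1 + 1 / x) < 10 / (9 * (x + 1)) := by
  rw [logb, div_lt_div_iff₀ (by linarith [two_lt_log_ten]) (by positivity)]
  calc log (1 + 1 / x) * (9 * (x + 1)) < 1 / x * (9 * (x + 1)) := by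
        gcongr; exact log_one_add_one_div_lt_one_div (by positivity)
    _ = 9 + 9 / x := by field_simp
    _ ≤ 20 := by linarith [div_le_self (by norm_num : (0 : ℝ) ≤ 9) hx]
    _ < 10 * log 10 := by linarith [two_lt_log_ten]

theorem benford_between_general (n : ℕ) (hn : 1 ≤ n) :
    1 / (9 * (n : ℝ)) < Real.logb 10 (1 + 1 / n) ∧
    Real.logb 10 (1 + 1 / n) < 10 / (9 * ((n : ℝ) + 1)) := by
  have hn' : (1 : ℝ) ≤ n := by exact_mod_cast hn
  exact ⟨one_div_nine_mul_lt_logb_ten hn', logb_ten_lt_ten_div_nine_mul hn'⟩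

theorem benford_between (n : ℕ) (hn : 1 ≤ n) (hn9 : n ≤ 9) :
    1 / (9 * (n : ℝ)) < Real.logb 10 (1 + 1 / n) ∧
    Real.logb 10 (1 + 1 / n) < 10 / (9 * ((n : ℝ) + 1)) :=
  benford_between_general n hn
end
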